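/- arXiv:2304.12680 — 2 statements merged into one kernel-verified Lean document; each statement's English description precedes it below -/
import Mathlib

section
/- Let μ be a σ-finite measure on a measurable space, let a, b be nonnegative measurable functions with ∫ a dμ = ∫ b dμ = 1, and let Δ ∈ (0, 1/4]. Define p := (a + b)/2 and q := (a + b)/2 + Δ(a − b). Then q is nonnegative with ∫ q dμ = 1, q(x) ≥ (a(x) + b(x))/4 for all x, and ∫ (p(x) − q(x))²/q(x) dμ(x) ≤ 4Δ² ∫_{\{a+b>0\}} (a(x) − b(x))²/(a(x) + b(x)) dμ(x). -/
open MeasureTheory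

/-- Per-round chi-squared bound: shifting an equal-weight mixture of densities `a`, `b`
by `Δ·(a−b)` with `Δ ∈ (0, 1/4]` yields a density `q ≥ (a+b)/4` with total mass one, and
the chi-squared divergence from the mixture `p = (a+b)/2` to `q` is at most
`4Δ² ∫_{a+b>0} (a−b)²/(a+b)`. -/
theorem chiSq_mixture_shift_bound {α : Type*} [MeasurableSpace α] (μ : Measure α)
    [SigmaFinite μ]
    (a b : α → ℝ) (ham : Measurable a) (hbm : Measurable b)
    (ha0 : ∀ x, 0 ≤ a x) (hb0 : ∀ x, 0 ≤ b x)
    (ha1 : ∫ x, a x ∂μ = 1) (hb1 : ∫ x, b x ∂μ = 1)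
    (Δ : ℝ) (hΔ0 : 0 < Δ) (hΔ : Δ ≤ 1 / 4)
    (p q : α → ℝ)
    (hp : p = fun x => (a x + b x) / 2)
    (hq : q = fun x => (a x + b x) / 2 + Δ * (a x - b x)) :
    (∀ x, 0 ≤ q x) ∧ (∫ x, q x ∂μ = 1) ∧ (∀ x, (a x + b x) / 4 ≤ q x) ∧
      ∫ x, (p x - q x) ^ 2 / q x ∂μ ≤
        4 * Δ ^ 2 * ∫ x in {x | 0 < a x + b x}, (a x - b x) ^ 2 / (a x + b x) ∂μ := by
  have ha_int : Integrable a μ := by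
    by_contra h; rw [integral_undef h] at ha1; norm_num at ha1
  have hb_int : Integrable b μ := by
    by_contra h; rw [integral_undef h] at hb1; norm_num at hb1
  -- q ≥ (a+b)/4
  have hq4 : ∀ x, (a x + b x) / 4 ≤ q x := by
    intro x
    have h1 : -(a x + b x) ≤ a x - b x := by nlinarith [ha0 x, hb0 x]
    have h2 : Δ * (-(a x + b x)) ≤ Δ * (a x - b x) :=
      mul_le_mul_of_nonneg_left h1 hΔ0.le
    rw [hq]
    nlinarith [ha0 x, hb0 x]
  have hq0 : ∀ x, 0 ≤ q x := fun x =>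
    le_trans (by nlinarith [ha0 x, hb0 x]) (hq4 x)
  -- total mass
  have hqint : (∫ x, q x ∂μ) = 1 := by
    rw [hq]
    have : (fun x => (a x + b x) / 2 + Δ * (a x - b x))
        = fun x => (1/2 + Δ) * a x + (1/2 - Δ) * b x := by
      funext x; ring
    rw [this, integral_add ((ha_int.const_mul _)) ((hb_int.const_mul _)),
      integral_const_mul, integral_const_mul, ha1, hb1]
    ring
  refine ⟨hq0, hqint, hq4, ?_⟩
  set S : Set α := {x | 0 < a x + b x} with hS
  have hSmeas : MeasurableSet S := measurableSet_lt measurable_const (ham.add hbm)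
  set h : α → ℝ := fun x => (a x - b x) ^ 2 / (a x + b x) with hh
  have hhm : Measurable h := ((ham.sub hbm).pow_const 2).div (ham.add hbm)
  have hh0 : ∀ x, 0 ≤ h x := fun x =>
    div_nonneg (sq_nonneg _) (by nlinarith [ha0 x, hb0 x])
  have hhle : ∀ x, h x ≤ a x + b x := by
    intro x
    rcases lt_or_ge 0 (a x + b x) with hpos | hle
    · rw [div_le_iff₀ hpos]; nlinarith [ha0 x, hb0 x]
    · have hax : a x = 0 := le_antisymm (by linarith [hb0 x]) (ha0 x)
      have hbx : b x = 0 := le_antisymm (by linarith [ha0 x]) (hb0 x)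
      simp [hh, hax, hbx]
  have hhint : Integrable h μ := by
    refine (ha_int.add hb_int).mono' hhm.aestronglyMeasurable ?_
    filter_upwards with x
    rw [Real.norm_of_nonneg (hh0 x)]
    exact hhle x
  have hgint : Integrable (fun x => 4 * Δ ^ 2 * S.indicator h x) μ :=
    (hhint.indicator hSmeas).const_mul _
  have hbound : ∀ x, (p x - q x) ^ 2 / q x ≤ 4 * Δ ^ 2 * S.indicator h x := by
    intro x
    by_cases hx : x ∈ S
    · rw [Set.indicator_of_mem hx]
      have hpos : 0 < a x + b x := hx
      have hqpos : 0 < q x := lt_of_lt_of_le (by linarith) (hq4 x)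
      have hnum : (p x - q x) ^ 2 = Δ ^ 2 * (a x - b x) ^ 2 := by
        rw [hp, hq]; ring
      rw [hnum]
      have step1 : Δ ^ 2 * (a x - b x) ^ 2 / q x
          ≤ Δ ^ 2 * (a x - b x) ^ 2 / ((a x + b x) / 4) := by
        apply div_le_div_of_nonneg_left (by positivity) (by linarith) (hq4 x)
      refine step1.trans (le_of_eq ?_)
      rw [hh]
      field_simp
    · rw [Set.indicator_of_notMem hx]
      have hle : a x + b x ≤ 0 := not_lt.mp hx
      have hax : a x = 0 := le_antisymm (by linarith [hb0 x]) (ha0 x)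
      have hbx : b x = 0 := le_antisymm (by linarith [ha0 x]) (hb0 x)
      simp [hp, hq, hax, hbx]
  have hf0 : ∀ x, 0 ≤ (p x - q x) ^ 2 / q x := fun x =>
    div_nonneg (sq_nonneg _) (hq0 x)
  calc ∫ x, (p x - q x) ^ 2 / q x ∂μ
      ≤ ∫ x, 4 * Δ ^ 2 * S.indicator h x ∂μ :=
        integral_mono_of_nonneg (Filter.Eventually.of_forall hf0) hgint
          (Filter.Eventually.of_forall hbound)
    _ = 4 * Δ ^ 2 * ∫ x, S.indicator h x ∂μ := integral_const_mul _ _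
    _ = 4 * Δ ^ 2 * ∫ x in S, h x ∂μ := by rw [integral_indicator hSmeas]
end

section
/- Let s > 0, B ≥ 1, set τ := max(2/s, 2), and define the sequence (b_ℓ) of nonnegative reals by b₀ := B² and b_{ℓ+1} := (b_ℓ/s + 1)/τ + 1 for all ℓ ≥ 0. Then for every natural number L with 2^L ≥ B², we have b_L ≤ 4. -/
/-- Geometric convergence of the UE-UCB++ recursion: starting from `b₀ = B²` with `B ≥ 1`,
the recursion `b_{ℓ+1} = (b_ℓ/s + 1)/τ + 1`, `τ = max(2/s, 2)`, satisfies `b_L ≤ 4`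
once `2^L ≥ B²`. -/
theorem recursion_le_four (s B : ℝ) (hs : 0 < s) (hB : 1 ≤ B)
    (τ : ℝ) (hτ : τ = max (2 / s) 2)
    (b : ℕ → ℝ) (hb0 : b 0 = B ^ 2)
    (hrec : ∀ ℓ : ℕ, b (ℓ + 1) = (b ℓ / s + 1) / τ + 1) :
    ∀ L : ℕ, B ^ 2 ≤ (2 : ℝ) ^ L → b L ≤ 4 := by
  have hτ2 : (2 : ℝ) ≤ τ := by rw [hτ]; exact le_max_right _ _
  have hτpos : (0 : ℝ) < τ := lt_of_lt_of_le two_pos hτ2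
  have hsτ : (2 : ℝ) ≤ s * τ := by
    have h1 : 2 / s ≤ τ := by rw [hτ]; exact le_max_left _ _
    calc (2 : ℝ) = s * (2 / s) := by field_simp
    _ ≤ s * τ := by nlinarith
  have key : ∀ L : ℕ, 0 ≤ b L ∧ b L ≤ B ^ 2 / 2 ^ L + 3 := by
    intro L
    induction L with
    | zero => constructor <;> nlinarith [sq_nonneg B]
    | succ n ih =>
      obtain ⟨h0, h1⟩ := ih
      have hrw : b (n + 1) = (b n / s + 1) / τ + 1 := hrec n
      have hnn : 0 ≤ b (n + 1) := by
        rw [hrw]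
        have : 0 ≤ (b n / s + 1) / τ := by positivity
        linarith
      refine ⟨hnn, ?_⟩
      have hstep : b (n + 1) ≤ b n / 2 + 3 / 2 := by
        rw [hrw]
        have e1 : (b n / s + 1) / τ = b n / (s * τ) + 1 / τ := by
          field_simp
        rw [e1]
        have h2 : b n / (s * τ) ≤ b n / 2 :=
          div_le_div_of_nonneg_left h0 two_pos hsτ |>.trans_eq rfl
        have h3 : 1 / τ ≤ 1 / 2 := by
          apply div_le_div_of_nonneg_left one_pos.le two_pos hτ2
        linarith
      have hpow : (0:ℝ) < (2:ℝ) ^ n := by positivity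
      calc b (n + 1) ≤ b n / 2 + 3 / 2 := hstep
        _ ≤ (B ^ 2 / 2 ^ n + 3) / 2 + 3 / 2 := by linarith
        _ = B ^ 2 / 2 ^ (n + 1) + 3 := by rw [pow_succ]; field_simp; ring
  intro L hL
  have hpow : (0:ℝ) < (2:ℝ) ^ L := by positivity
  have : B ^ 2 / 2 ^ L ≤ 1 := by rw [div_le_one hpow]; exact hL
  linarith [(key L).2]
end
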